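/- arXiv:1705.01000 — 6 statements merged into one kernel-verified Lean document; each statement's English description precedes it below -/
import Mathlib

section
/- If B is a measure algebra, then B is uniformly weakly distributive; indeed, the functions F_n assigning to each countable maximal antichain W a finite subset E ⊆ W with m(⋁E) ≥ 1 − 1/2^n witness uniform weak distributivity. -/
universe u

/-- A Boolean σ-algebra: a Boolean algebra in which every countable subset
(equivalently, every `ℕ`-indexed sequence) has a supremum. -/
class BooleanSigmaAlgebra (α : Type u) extends BooleanAlgebra α where
  seqSup : (ℕ → α) → α
  le_seqSup : ∀ (f : ℕ → α) (n : ℕ), f n ≤ seqSup f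
  seqSup_le : ∀ (f : ℕ → α) (b : α), (∀ n, f n ≤ b) → seqSup f ≤ b

namespace BooleanSigmaAlgebra

variable {α : Type u} [BooleanSigmaAlgebra α]

/-- Countable infimum, derived from countable suprema via complements. -/
def seqInf (f : ℕ → α) : α := (seqSup fun n => (f n)ᶜ)ᶜ

/-- `limsup_n a_n = ⋀_n ⋁_{k ≥ n} a_k`. -/
def blimsup (f : ℕ → α) : α := seqInf fun n => seqSup fun k => f (n + k)

/-- `liminf_n a_n = ⋁_n ⋀_{k ≥ n} a_k`. -/
def bliminf (f : ℕ → α) : α := seqSup fun n => seqInf fun k => f (n + k)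

/-- The sequence `a_n` converges to `0`, i.e. `limsup_n a_n = 0` (which is
equivalent to `lim_n a_n = 0`). -/
def TendstoBot (f : ℕ → α) : Prop := blimsup f = ⊥

/-- The sequence `a_n` converges to `1`, i.e. `liminf_n a_n = 1` (which is
equivalent to `lim_n a_n = 1`). -/
def TendstoTop (f : ℕ → α) : Prop := bliminf f = ⊤

/-- An antichain: a set of nonzero pairwise disjoint elements. -/
def IsAC (A : Set α) : Prop := ⊥ ∉ A ∧ A.Pairwise fun a b => a ⊓ b = ⊥

/-- A maximal antichain: an antichain such that every nonzero element meets
some member of it. -/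
def IsMaxAC (W : Set α) : Prop := IsAC W ∧ ∀ b : α, b ≠ ⊥ → ∃ w ∈ W, w ⊓ b ≠ ⊥

/-- A countable maximal antichain. -/
def IsCMA (W : Set α) : Prop := W.Countable ∧ IsMaxAC W

/-- `B` is weakly distributive: every sequence `{W_n}` of countable maximal
antichains admits finite subsets `E_n ⊆ W_n` with `lim_n ⋁E_n = 1`. -/
def WeaklyDistributive (α : Type u) [BooleanSigmaAlgebra α] : Prop :=
  ∀ W : ℕ → Set α, (∀ n, IsCMA (W n)) →
    ∃ E : ℕ → Finset α, (∀ n, ↑(E n) ⊆ W n) ∧ TendstoTop fun n => (E n).sup id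

/-- `B` is uniformly weakly distributive: there are functions `F_n` assigning
to each countable maximal antichain `W` a finite subset `F_n(W) ⊆ W` such that
for every sequence `{W_n}` of countable maximal antichains,
`lim_n ⋁F_n(W_n) = 1`. -/
def UniformlyWeaklyDistributive (α : Type u) [BooleanSigmaAlgebra α] : Prop :=
  ∃ F : ℕ → Set α → Finset α,
    (∀ (n : ℕ) (W : Set α), IsCMA W → ↑(F n W) ⊆ W) ∧
    ∀ W : ℕ → Set α, (∀ n, IsCMA (W n)) → TendstoTop fun n => (F n (W n)).sup id

/-- `B` is uniformly concentrated: there is a function `F` assigning to each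
finite antichain `A` an element `F(A) ∈ A` such that for every sequence `{A_n}`
of finite antichains with `|A_n| ≥ 2^n`, `lim_n F(A_n) = 0`. -/
def UniformlyConcentrated (α : Type u) [BooleanSigmaAlgebra α] : Prop :=
  ∃ F : Finset α → α,
    (∀ A : Finset α, A.Nonempty → IsAC (↑A : Set α) → F A ∈ A) ∧
    ∀ A : ℕ → Finset α, (∀ n, IsAC (↑(A n) : Set α) ∧ 2 ^ n ≤ (A n).card) →
      TendstoBot fun n => F (A n)

/-- `B` is concentrated: for every sequence `{A_n}` of finite antichains with
`|A_n| ≥ 2^n` there are `a_n ∈ A_n` with `lim_n a_n = 0`. -/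
def Concentrated (α : Type u) [BooleanSigmaAlgebra α] : Prop :=
  ∀ A : ℕ → Finset α, (∀ n, IsAC (↑(A n) : Set α) ∧ 2 ^ n ≤ (A n).card) →
    ∃ a : ℕ → α, (∀ n, a n ∈ A n) ∧ TendstoBot a

/-- A strictly positive finitely additive (probability) measure on `B`. -/
structure IsFinAddMeasure (m : α → ℝ) : Prop where
  map_bot : m ⊥ = 0
  pos : ∀ a : α, a ≠ ⊥ → 0 < m a
  map_top : m ⊤ = 1
  mono : ∀ a b : α, a ≤ b → m a ≤ m b
  add : ∀ a b : α, a ⊓ b = ⊥ → m (a ⊔ b) = m a + m b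

/-- A (strictly positive, σ-additive, probability) measure on `B`. -/
structure IsMeasure (m : α → ℝ) extends IsFinAddMeasure m : Prop where
  sigma_add : ∀ f : ℕ → α, (∀ i j : ℕ, i ≠ j → f i ⊓ f j = ⊥) →
    HasSum (fun n => m (f n)) (m (seqSup f))

/-- A measure algebra: a Boolean σ-algebra carrying a measure. -/
def IsMeasureAlgebra (α : Type u) [BooleanSigmaAlgebra α] : Prop :=
  ∃ m : α → ℝ, IsMeasure m

/-- A fragmentation of `B`: an increasing sequence of upward closed subsets of
`B ∖ {0}` whose union is `B ∖ {0}`. -/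
structure IsFragmentation (C : ℕ → Set α) : Prop where
  mono : ∀ n, C n ⊆ C (n + 1)
  not_bot : ∀ n, ⊥ ∉ C n
  upward : ∀ (n : ℕ) (a b : α), a ∈ C n → a ≤ b → b ∈ C n
  covers : ∀ a : α, a ≠ ⊥ → ∃ n, a ∈ C n

/-- A fragmentation is tight if `a_n ∉ C_n` for all `n` implies `lim_n a_n = 0`. -/
def Tight (C : ℕ → Set α) : Prop :=
  ∀ a : ℕ → α, (∀ n, a n ∉ C n) → TendstoBot a

/-- A fragmentation is σ-bounded cc if for every `n` there is a bound `K_n` on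
the size of antichains contained in `C_n`. -/
def SigmaBoundedCC (C : ℕ → Set α) : Prop :=
  ∀ n : ℕ, ∃ K : ℕ, ∀ A : Set α, A ⊆ C n → IsAC A → A.Finite ∧ A.ncard ≤ K

/-- A fragmentation is σ-finite cc if every antichain contained in some `C_n`
is finite. -/
def SigmaFiniteCC (C : ℕ → Set α) : Prop :=
  ∀ n : ℕ, ∀ A : Set α, A ⊆ C n → IsAC A → A.Finite

/-- A fragmentation is `G_δ` if for every `n` no sequence of elements of `C_n`
converges to `0`. -/
def GDelta (C : ℕ → Set α) : Prop :=
  ∀ (n : ℕ) (a : ℕ → α), (∀ k, a k ∈ C n) → ¬ TendstoBot a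

/-- A fragmentation is graded if `a ⊔ b ∈ C_n` implies `a ∈ C_{n+1}` or
`b ∈ C_{n+1}`. -/
def Graded (C : ℕ → Set α) : Prop :=
  ∀ (n : ℕ) (a b : α), a ⊔ b ∈ C n → a ∈ C (n + 1) ∨ b ∈ C (n + 1)

end BooleanSigmaAlgebra

open BooleanSigmaAlgebra

namespace BSAProof

open BooleanSigmaAlgebra Finset

variable {α : Type u} [BooleanSigmaAlgebra α] {m : α → ℝ}

lemma m_nonneg (hm : IsMeasure m) (a : α) : 0 ≤ m a := by
  rw [← hm.map_bot]; exact hm.mono _ _ bot_le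

lemma seqInf_le (f : ℕ → α) (n : ℕ) : seqInf f ≤ f n := by
  rw [seqInf, ← compl_compl (f n)]
  exact compl_le_compl (le_seqSup (fun k => (f k)ᶜ) n)

/-- disjointification -/
def dj (f : ℕ → α) (n : ℕ) : α := f n ⊓ ((Finset.range n).sup f)ᶜ

lemma dj_le (f : ℕ → α) (n : ℕ) : dj f n ≤ f n := inf_le_left

lemma dj_sup_range (f : ℕ → α) : ∀ n, (Finset.range n).sup (dj f) = (Finset.range n).sup f := by
  intro n
  induction n with
  | zero => simp
  | succ n ih =>
    rw [Finset.range_add_one, Finset.sup_insert, Finset.sup_insert, sup_comm, sup_comm (f n), ih,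
      dj, sup_inf_left, sup_compl_eq_top, inf_top_eq]

lemma dj_disjoint (f : ℕ → α) {i j : ℕ} (h : i ≠ j) : dj f i ⊓ dj f j = ⊥ := by
  wlog hij : i < j generalizing i j
  · rw [inf_comm]; exact this h.symm (h.lt_or_gt.resolve_left hij)
  have h1 : dj f i ≤ (Finset.range j).sup f :=
    le_trans (dj_le f i) (Finset.le_sup (Finset.mem_range.2 hij))
  have h2 : dj f j ≤ ((Finset.range j).sup f)ᶜ := inf_le_right
  exact le_bot_iff.mp (le_trans (inf_le_inf h1 h2) (le_of_eq inf_compl_eq_bot))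

lemma dj_seqSup (f : ℕ → α) : seqSup (dj f) = seqSup f := by
  apply le_antisymm
  · exact seqSup_le _ _ fun n => le_trans (dj_le f n) (le_seqSup f n)
  · refine seqSup_le _ _ fun n => ?_
    have h1 : f n ≤ (Finset.range (n + 1)).sup f :=
      Finset.le_sup (Finset.mem_range.2 (Nat.lt_succ_self n))
    rw [← dj_sup_range] at h1
    exact le_trans h1 (Finset.sup_le fun k _ => le_seqSup (dj f) k)

lemma m_sup_range (hm : IsMeasure m) (f : ℕ → α) (n : ℕ) :
    m ((Finset.range n).sup (dj f)) = ∑ k ∈ Finset.range n, m (dj f k) := by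
  induction n with
  | zero => simpa using hm.map_bot
  | succ n ih =>
    rw [Finset.range_add_one, Finset.sup_insert, Finset.sum_insert (by simp)]
    have hd : dj f n ⊓ (Finset.range n).sup (dj f) = ⊥ := by
      have : (Finset.range n).sup (dj f) ≤ (dj f n)ᶜ := by
        refine Finset.sup_le fun k hk => ?_
        have := dj_disjoint f (Nat.ne_of_lt (Finset.mem_range.1 hk)).symm
        exact le_compl_iff_disjoint_right.mpr (disjoint_iff.mpr (by rwa [inf_comm] at this)) |>.trans le_rfl
      exact le_bot_iff.mp (le_trans (inf_le_inf le_rfl this) (le_of_eq inf_compl_eq_bot))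
    rw [hm.add _ _ hd, ih]

lemma hasSum_dj (hm : IsMeasure m) (f : ℕ → α) :
    HasSum (fun n => m (dj f n)) (m (seqSup f)) := by
  rw [← dj_seqSup f]
  exact hm.sigma_add _ fun i j h => dj_disjoint f h

/-- countable subadditivity bound -/
lemma m_seqSup_le (hm : IsMeasure m) (f : ℕ → α) (c : ℕ → ℝ) (hc : ∀ n, m (f n) ≤ c n)
    (hsc : Summable c) : m (seqSup f) ≤ ∑' n, c n := by
  have h := hasSum_dj hm f
  rw [← h.tsum_eq]
  exact Summable.tsum_le_tsum (fun n => le_trans (hm.mono _ _ (dj_le f n)) (hc n)) h.summable hsc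

lemma top_ne_bot (hm : IsMeasure m) : (⊤ : α) ≠ ⊥ := by
  intro h
  have := hm.map_top
  rw [h, hm.map_bot] at this
  norm_num at this

lemma seqSup_eq_top (hm : IsMeasure m) {W : Set α} (hW : IsMaxAC W) (f : ℕ → α)
    (hf : Set.range f = W) : seqSup f = ⊤ := by
  rw [← compl_eq_bot]
  by_contra hc
  obtain ⟨w, hwW, hw⟩ := hW.2 _ hc
  obtain ⟨k, rfl⟩ := hf ▸ hwW
  exact hw (le_bot_iff.mp (le_trans (inf_le_inf (le_seqSup f k) le_rfl) (le_of_eq inf_compl_eq_bot)))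

lemma exists_finset_approx (hm : IsMeasure m) {W : Set α} (hW : IsCMA W) {ε : ℝ} (hε : 0 < ε) :
    ∃ E : Finset α, ↑E ⊆ W ∧ 1 - ε ≤ m (E.sup id) := by
  classical
  have hWne : W.Nonempty := by
    obtain ⟨w, hw, _⟩ := hW.2.2 ⊤ (top_ne_bot hm)
    exact ⟨w, hw⟩
  obtain ⟨f, hf⟩ := Set.Countable.exists_eq_range hW.1 hWne
  have htop : seqSup f = ⊤ := seqSup_eq_top hm hW.2 f hf.symm
  have hsum : HasSum (fun n => m (dj f n)) 1 := by
    have := hasSum_dj hm f; rwa [htop, hm.map_top] at this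
  have htend := hsum.tendsto_sum_nat
  have : ∀ᶠ N in Filter.atTop, 1 - ε < ∑ k ∈ Finset.range N, m (dj f k) :=
    htend.eventually (eventually_gt_nhds (by linarith))
  obtain ⟨N, hN⟩ := this.exists
  refine ⟨(Finset.range N).image f, ?_, ?_⟩
  · intro x hx
    rw [Finset.coe_image] at hx
    obtain ⟨k, _, rfl⟩ := hx
    exact hf ▸ Set.mem_range_self k
  · have hsup : ((Finset.range N).image f).sup id = (Finset.range N).sup f := by
      rw [Finset.sup_image]; rfl
    rw [hsup, ← dj_sup_range, m_sup_range hm]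
    linarith

lemma bliminf_compl (a : ℕ → α) : (bliminf a)ᶜ = blimsup (fun n => (a n)ᶜ) := by
  simp only [bliminf, blimsup, seqInf, compl_compl]

lemma tendstoTop_of_m_ge (hm : IsMeasure m) (a : ℕ → α)
    (ha : ∀ n, 1 - 1 / 2 ^ n ≤ m (a n)) : TendstoTop a := by
  have hmc : ∀ n, m ((a n)ᶜ) ≤ (1 / 2 : ℝ) ^ n := by
    intro n
    have hadd : m (a n ⊔ (a n)ᶜ) = m (a n) + m ((a n)ᶜ) := hm.add _ _ inf_compl_eq_bot
    rw [sup_compl_eq_top, hm.map_top] at hadd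
    have := ha n
    rw [one_div, ← inv_pow] at *
    nlinarith [ha n, this]
  have key : ∀ n, m (blimsup (fun k => (a k)ᶜ)) ≤ (1 / 2 : ℝ) ^ n * 2 := by
    intro n
    have h1 : blimsup (fun k => (a k)ᶜ) ≤ seqSup (fun k => (a (n + k))ᶜ) :=
      seqInf_le _ n
    have h2 : m (seqSup (fun k => (a (n + k))ᶜ)) ≤ ∑' k : ℕ, (1 / 2 : ℝ) ^ (n + k) := by
      refine m_seqSup_le hm _ _ (fun k => hmc (n + k)) ?_
      simpa [pow_add] using (summable_geometric_two.mul_left ((1/2:ℝ)^n))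
    have h3 : ∑' k : ℕ, (1 / 2 : ℝ) ^ (n + k) = (1 / 2 : ℝ) ^ n * 2 := by
      simp only [pow_add]
      rw [tsum_mul_left, tsum_geometric_two]
    exact le_trans (hm.mono _ _ h1) (h3 ▸ h2)
  have hle : m (blimsup (fun k => (a k)ᶜ)) ≤ 0 := by
    have htt : Filter.Tendsto (fun n : ℕ => (1 / 2 : ℝ) ^ n * 2) Filter.atTop (nhds 0) := by
      have : Filter.Tendsto (fun n : ℕ => (1 / 2 : ℝ) ^ n) Filter.atTop (nhds 0) :=
        tendsto_pow_atTop_nhds_zero_of_lt_one (by norm_num) (by norm_num)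
      simpa using this.mul_const 2
    exact ge_of_tendsto' htt key
  have hbot : blimsup (fun k => (a k)ᶜ) = ⊥ := by
    by_contra h
    exact absurd (hm.pos _ h) (not_lt.mpr hle)
  rw [TendstoTop, ← compl_eq_bot, bliminf_compl]
  exact hbot

end BSAProof

/-- If `B` is a measure algebra then `B` is uniformly weakly distributive;
indeed, the functions `F_n` assigning to each countable maximal antichain `W`
a finite subset `E ⊆ W` with `m(⋁E) ≥ 1 - 1/2^n` exist and witness uniform
weak distributivity. -/
theorem measureAlgebra_uniformlyWeaklyDistributive
    (α : Type u) [BooleanSigmaAlgebra α] (m : α → ℝ) (hm : IsMeasure m) :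
    UniformlyWeaklyDistributive α ∧
    (∃ F : ℕ → Set α → Finset α, ∀ (n : ℕ) (W : Set α), IsCMA W →
        ↑(F n W) ⊆ W ∧ 1 - 1 / 2 ^ n ≤ m ((F n W).sup id)) ∧
    (∀ F : ℕ → Set α → Finset α,
      (∀ (n : ℕ) (W : Set α), IsCMA W →
        ↑(F n W) ⊆ W ∧ 1 - 1 / 2 ^ n ≤ m ((F n W).sup id)) →
      (∀ (n : ℕ) (W : Set α), IsCMA W → ↑(F n W) ⊆ W) ∧
      ∀ W : ℕ → Set α, (∀ n, IsCMA (W n)) →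
        TendstoTop fun n => (F n (W n)).sup id) := by
  classical
  have approx : ∀ (n : ℕ) (W : Set α), IsCMA W →
      ∃ E : Finset α, ↑E ⊆ W ∧ 1 - 1 / 2 ^ n ≤ m (E.sup id) := fun n W hW =>
    BSAProof.exists_finset_approx hm hW (by positivity)
  set F : ℕ → Set α → Finset α := fun n W => if h : IsCMA W then (approx n W h).choose else ∅
    with hF
  have hFspec : ∀ (n : ℕ) (W : Set α), IsCMA W →
      ↑(F n W) ⊆ W ∧ 1 - 1 / 2 ^ n ≤ m ((F n W).sup id) := by
    intro n W hW
    simp only [hF, dif_pos hW]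
    exact (approx n W hW).choose_spec
  have part3 : ∀ G : ℕ → Set α → Finset α,
      (∀ (n : ℕ) (W : Set α), IsCMA W →
        ↑(G n W) ⊆ W ∧ 1 - 1 / 2 ^ n ≤ m ((G n W).sup id)) →
      (∀ (n : ℕ) (W : Set α), IsCMA W → ↑(G n W) ⊆ W) ∧
      ∀ W : ℕ → Set α, (∀ n, IsCMA (W n)) →
        TendstoTop fun n => (G n (W n)).sup id := by
    intro G hG
    refine ⟨fun n W hW => (hG n W hW).1, fun W hW => ?_⟩
    exact BSAProof.tendstoTop_of_m_ge hm _ fun n => (hG n (W n) (hW n)).2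
  exact ⟨⟨F, (part3 F hFspec).1, (part3 F hFspec).2⟩, ⟨F, hFspec⟩, part3⟩
end

section
/- If B is a measure algebra, then B is uniformly concentrated; indeed, the function F assigning to each finite antichain A an element of A of least measure witnesses uniform concentration. -/
universe u

open BooleanSigmaAlgebra

namespace BooleanSigmaAlgebra
variable {α : Type u} [BooleanSigmaAlgebra α]

lemma seqSup_mono' {f g : ℕ → α} (h : ∀ n, f n ≤ g n) : seqSup f ≤ seqSup g :=
  seqSup_le _ _ fun n => (h n).trans (le_seqSup g n)

lemma seqInf_le' (f : ℕ → α) (n : ℕ) : seqInf f ≤ f n := by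
  rw [seqInf, ← compl_compl (f n)]
  exact compl_le_compl (le_seqSup (fun k => (f k)ᶜ) n)

lemma measure_nonneg' {m : α → ℝ} (hm : IsFinAddMeasure m) (a : α) : 0 ≤ m a := by
  by_cases h : a = ⊥
  · simp [h, hm.map_bot]
  · exact (hm.pos a h).le

lemma sum_measure_eq {m : α → ℝ} (hm : IsFinAddMeasure m)
    (A : Finset α) (hA : (↑A : Set α).Pairwise fun a b => a ⊓ b = ⊥) :
    ∑ a ∈ A, m a = m (A.sup id) := by
  classical
  induction A using Finset.induction_on with
  | empty => simp [hm.map_bot]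
  | @insert a s ha ih =>
    have hA' : (↑s : Set α).Pairwise fun a b => a ⊓ b = ⊥ :=
      hA.mono (by simp [Set.subset_insert])
    have hdisj : a ⊓ s.sup id = ⊥ := by
      rw [← disjoint_iff]
      rw [Finset.disjoint_sup_right]
      intro i hi
      rw [disjoint_iff]
      exact hA (by simp) (by simp [hi]) (fun h => ha (h ▸ hi))
    rw [Finset.sum_insert ha, Finset.sup_insert, ih hA']
    simp only [id]
    exact (hm.add _ _ hdisj).symm

lemma measure_seqSup_le {m : α → ℝ} (hm : IsMeasure m) {g : ℕ → α} {c : ℕ → ℝ}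
    (hs : Summable c) (hb : ∀ k, m (g k) ≤ c k) :
    m (seqSup g) ≤ ∑' k, c k := by
  set d : ℕ → α := fun k => g k \ (Finset.range k).sup g with hd
  have hdle : ∀ k, d k ≤ g k := fun k => sdiff_le
  have hdisj : ∀ i j : ℕ, i ≠ j → d i ⊓ d j = ⊥ := by
    have key : ∀ i j : ℕ, i < j → d i ⊓ d j = ⊥ := by
      intro i j hij
      have h1 : d j ≤ (g i)ᶜ := by
        calc d j ≤ ((Finset.range j).sup g)ᶜ := by
              rw [hd]; simp only [sdiff_eq]; exact inf_le_right
          _ ≤ (g i)ᶜ := compl_le_compl (Finset.le_sup (Finset.mem_range.2 hij))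
      have : d i ⊓ d j ≤ g i ⊓ (g i)ᶜ := inf_le_inf (hdle i) h1
      simpa using le_bot_iff.mp (by simpa using this)
    intro i j hij
    rcases lt_or_gt_of_ne hij with h | h
    · exact key i j h
    · rw [inf_comm]; exact key j i h
  have hranges : ∀ n, (Finset.range n).sup d = (Finset.range n).sup g := by
    intro n
    induction n with
    | zero => simp
    | succ n ih =>
      rw [Finset.range_add_one, Finset.sup_insert, Finset.sup_insert, ih]
      exact sdiff_sup_self _ _
  have hsup : seqSup d = seqSup g := by
    apply le_antisymm (seqSup_mono' hdle)
    apply seqSup_le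
    intro n
    calc g n ≤ (Finset.range (n+1)).sup g := Finset.le_sup (Finset.mem_range.2 n.lt_succ_self)
      _ = (Finset.range (n+1)).sup d := (hranges _).symm
      _ ≤ seqSup d := Finset.sup_le fun k _ => le_seqSup d k
  have hHS := hm.sigma_add d hdisj
  rw [hsup] at hHS
  rw [← hHS.tsum_eq]
  exact Summable.tsum_le_tsum (fun k => (hm.mono _ _ (hdle k)).trans (hb k)) hHS.summable hs
end BooleanSigmaAlgebra

open BooleanSigmaAlgebra

/-- If `B` is a measure algebra then `B` is uniformly concentrated; indeed,
the function `F` assigning to each finite antichain `A` an element of `A` of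
least measure exists and witnesses uniform concentration. -/
theorem measureAlgebra_uniformlyConcentrated
    (α : Type u) [BooleanSigmaAlgebra α] (m : α → ℝ) (hm : IsMeasure m) :
    UniformlyConcentrated α ∧
    (∃ F : Finset α → α, ∀ A : Finset α, A.Nonempty → IsAC (↑A : Set α) →
        F A ∈ A ∧ ∀ a ∈ A, m (F A) ≤ m a) ∧
    (∀ F : Finset α → α,
      (∀ A : Finset α, A.Nonempty → IsAC (↑A : Set α) →
        F A ∈ A ∧ ∀ a ∈ A, m (F A) ≤ m a) →
      (∀ A : Finset α, A.Nonempty → IsAC (↑A : Set α) → F A ∈ A) ∧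
      ∀ A : ℕ → Finset α, (∀ n, IsAC (↑(A n) : Set α) ∧ 2 ^ n ≤ (A n).card) →
        TendstoBot fun n => F (A n)) := by
  
  classical
  have key : ∀ F : Finset α → α,
      (∀ A : Finset α, A.Nonempty → IsAC (↑A : Set α) →
        F A ∈ A ∧ ∀ a ∈ A, m (F A) ≤ m a) →
      (∀ A : Finset α, A.Nonempty → IsAC (↑A : Set α) → F A ∈ A) ∧
      ∀ A : ℕ → Finset α, (∀ n, IsAC (↑(A n) : Set α) ∧ 2 ^ n ≤ (A n).card) →
        TendstoBot fun n => F (A n) := by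
    intro F hF
    refine ⟨fun A hne hac => (hF A hne hac).1, ?_⟩
    intro A hA
    have hbound : ∀ n, m (F (A n)) ≤ (1/2 : ℝ)^n := by
      intro n
      have hcard := (hA n).2
      have hne : (A n).Nonempty := Finset.card_pos.mp (lt_of_lt_of_le (by positivity) hcard)
      obtain ⟨hmem, hmin⟩ := hF (A n) hne (hA n).1
      have hsum : ∑ a ∈ A n, m a ≤ 1 := by
        rw [sum_measure_eq hm.toIsFinAddMeasure (A n) (hA n).1.2]
        calc m ((A n).sup id) ≤ m ⊤ := hm.mono _ _ le_top
          _ = 1 := hm.map_top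
      have h1 : ((A n).card : ℝ) * m (F (A n)) ≤ 1 := by
        have := Finset.card_nsmul_le_sum (A n) m (m (F (A n))) (fun a ha => hmin a ha)
        rw [nsmul_eq_mul] at this
        linarith
      have h2 : (2:ℝ)^n * m (F (A n)) ≤ 1 := by
        have hc : (2:ℝ)^n ≤ ((A n).card : ℝ) := by exact_mod_cast hcard
        nlinarith [measure_nonneg' hm.toIsFinAddMeasure (F (A n))]
      rw [div_pow, one_pow, le_div_iff₀ (by positivity), mul_comm]
      linarith
    rw [TendstoBot]
    by_contra hne
    have hpos : 0 < m (blimsup fun n => F (A n)) := hm.pos _ hne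
    have hLle : ∀ n, m (blimsup fun n => F (A n)) ≤ 2 * (1/2:ℝ)^n := by
      intro n
      have h1 : blimsup (fun n => F (A n)) ≤ seqSup fun k => F (A (n + k)) :=
        seqInf_le' (fun n => seqSup fun k => F (A (n + k))) n
      have h2 : m (seqSup fun k => F (A (n+k))) ≤ ∑' k, (1/2:ℝ)^(n+k) := by
        apply measure_seqSup_le hm
        · have : Summable fun k : ℕ => (1/2:ℝ)^n * (1/2:ℝ)^k :=
            (summable_geometric_of_lt_one (by norm_num) (by norm_num)).mul_left _
          simpa [pow_add] using this
        · intro k; exact hbound (n+k)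
      have h3 : ∑' k : ℕ, (1/2:ℝ)^(n+k) = 2 * (1/2:ℝ)^n := by
        simp only [pow_add]
        rw [tsum_mul_left, tsum_geometric_of_lt_one (by norm_num) (by norm_num)]
        ring
      calc m (blimsup fun n => F (A n)) ≤ m (seqSup fun k => F (A (n+k))) := hm.mono _ _ h1
        _ ≤ ∑' k : ℕ, (1/2:ℝ)^(n+k) := h2
        _ = 2 * (1/2:ℝ)^n := h3
    obtain ⟨n, hn⟩ := exists_pow_lt_of_lt_one (half_pos hpos) (by norm_num : (1/2:ℝ) < 1)
    have := hLle n
    linarith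
  have hFex : ∃ F : Finset α → α, ∀ A : Finset α, A.Nonempty → IsAC (↑A : Set α) →
      F A ∈ A ∧ ∀ a ∈ A, m (F A) ≤ m a := by
    refine ⟨fun A => if h : A.Nonempty then (A.exists_min_image m h).choose else ⊥, ?_⟩
    intro A hne hac
    simp only [dif_pos hne]
    obtain ⟨h1, h2⟩ := (A.exists_min_image m hne).choose_spec
    exact ⟨h1, h2⟩
  obtain ⟨F0, hF0⟩ := hFex
  exact ⟨⟨F0, (key F0 hF0).1, (key F0 hF0).2⟩, ⟨F0, hF0⟩, key⟩
end

section
/- If a Boolean σ-algebra B is uniformly concentrated, then B has a tight σ-bounded cc fragmentation. -/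
universe u

open BooleanSigmaAlgebra

section Aux

variable {α : Type u} [BooleanSigmaAlgebra α]

lemma seqSup_mono {f g : ℕ → α} (h : ∀ n, f n ≤ g n) : seqSup f ≤ seqSup g :=
  seqSup_le f _ fun n => (h n).trans (le_seqSup g n)

lemma seqInf_le (f : ℕ → α) (n : ℕ) : seqInf f ≤ f n := by
  have := le_seqSup (fun n => (f n)ᶜ) n
  simpa [seqInf] using compl_le_compl this

lemma le_seqInf (f : ℕ → α) (b : α) (h : ∀ n, b ≤ f n) : b ≤ seqInf f := by
  have : seqSup (fun n => (f n)ᶜ) ≤ bᶜ :=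
    seqSup_le _ _ fun n => compl_le_compl (h n)
  simpa [seqInf] using compl_le_compl this

lemma seqInf_mono {f g : ℕ → α} (h : ∀ n, f n ≤ g n) : seqInf f ≤ seqInf g :=
  le_seqInf _ _ fun n => (seqInf_le f n).trans (h n)

lemma blimsup_mono {f g : ℕ → α} (h : ∀ n, f n ≤ g n) : blimsup f ≤ blimsup g :=
  seqInf_mono fun _ => seqSup_mono fun _ => h _

lemma le_blimsup_of_forall_le {f : ℕ → α} {a : α} (h : ∀ n, a ≤ f n) :
    a ≤ blimsup f :=
  le_seqInf _ _ fun n => (h (n + 0)).trans (le_seqSup (fun k => f (n + k)) 0)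

lemma blimsup_eq_bot_of_eventually_bot {f : ℕ → α} {N : ℕ}
    (h : ∀ k, f (N + k) = ⊥) : blimsup f = ⊥ := by
  refine le_bot_iff.mp ((seqInf_le _ N).trans ?_)
  exact seqSup_le _ ⊥ fun k => (h k).le

lemma isAC_subset {A B : Set α} (hB : IsAC B) (hAB : A ⊆ B) : IsAC A :=
  ⟨fun hb => hB.1 (hAB hb), hB.2.mono hAB⟩

end Aux

/-- If a Boolean σ-algebra `B` is uniformly concentrated, then `B` has a
tight σ-bounded cc fragmentation. -/
theorem uniformlyConcentrated_imp_tight_sigmaBoundedCC_fragmentation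
    (α : Type u) [BooleanSigmaAlgebra α] (h : UniformlyConcentrated α) :
    ∃ C : ℕ → Set α, IsFragmentation C ∧ Tight C ∧ SigmaBoundedCC C := by
  obtain ⟨F, hF1, hF2⟩ := h
  set C : ℕ → Set α := fun n =>
    {b | b ≠ ⊥ ∧ ∀ A : Finset α, IsAC (↑A : Set α) → 2 ^ n ≤ A.card → ¬ b ≤ F A}
    with hC
  -- key: no antichain of size `2 ^ n` sits inside `C n`
  have key : ∀ (n : ℕ) (t : Finset α), ↑t ⊆ C n → IsAC (↑t : Set α) →
      t.card ≠ 2 ^ n := by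
    intro n t ht hAC hcard
    have hne : t.Nonempty := by
      rw [← Finset.card_pos, hcard]; positivity
    have hmem : F t ∈ t := hF1 t hne hAC
    exact (ht hmem).2 t hAC hcard.ge le_rfl
  refine ⟨C, ⟨?_, ?_, ?_, ?_⟩, ?_, ?_⟩
  · -- mono
    intro n b hb
    refine ⟨hb.1, fun A hA hcard => hb.2 A hA ?_⟩
    exact le_trans (pow_le_pow_right₀ one_le_two (Nat.le_succ n)) hcard
  · -- not_bot
    intro n hbot
    exact hbot.1 rfl
  · -- upward
    intro n a b ha hab
    refine ⟨fun hb => ha.1 (le_bot_iff.mp (hb ▸ hab)), fun A hA hcard hle =>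
      ha.2 A hA hcard (hab.trans hle)⟩
  · -- covers
    intro a ha
    by_contra hcov
    push_neg at hcov
    have : ∀ n : ℕ, ∃ A : Finset α, IsAC (↑A : Set α) ∧ 2 ^ n ≤ A.card ∧ a ≤ F A := by
      intro n
      have := hcov n
      rw [hC] at this
      simp only [Set.mem_setOf_eq, not_and, not_forall, not_not] at this
      obtain ⟨A, hA, hcard, hle⟩ := this ha
      exact ⟨A, hA, hcard, hle⟩
    choose A hA hcard hle using this
    have h0 : TendstoBot fun n => F (A n) := hF2 A fun n => ⟨hA n, hcard n⟩
    have : a ≤ blimsup fun n => F (A n) := le_blimsup_of_forall_le hle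
    rw [h0] at this
    exact ha (le_bot_iff.mp this)
  · -- Tight
    intro a hnot
    by_cases H : ∀ m : ℕ, ∃ n, m ≤ n ∧ a n ≠ ⊥
    · -- get for each m an antichain of card ≥ 2^m dominating a m
      have step : ∀ m : ℕ, ∃ A : Finset α, IsAC (↑A : Set α) ∧ 2 ^ m ≤ A.card ∧
          a m ≤ F A := by
        intro m
        by_cases hm : a m = ⊥
        · obtain ⟨n, hn, hne⟩ := H m
          have := hnot n
          rw [hC] at this
          simp only [Set.mem_setOf_eq, not_and, not_forall, not_not] at this
          obtain ⟨A, hA, hcard, _⟩ := this hne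
          exact ⟨A, hA, le_trans (pow_le_pow_right₀ one_le_two hn) hcard,
            hm ▸ bot_le⟩
        · have := hnot m
          rw [hC] at this
          simp only [Set.mem_setOf_eq, not_and, not_forall, not_not] at this
          obtain ⟨A, hA, hcard, hle⟩ := this hm
          exact ⟨A, hA, hcard, hle⟩
      choose A hA hcard hle using step
      have h0 : TendstoBot fun n => F (A n) := hF2 A fun n => ⟨hA n, hcard n⟩
      have hle' : blimsup a ≤ blimsup fun n => F (A n) := blimsup_mono hle
      rw [h0] at hle'
      exact le_bot_iff.mp hle'
    · push_neg at H
      obtain ⟨m, hm⟩ := H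
      exact blimsup_eq_bot_of_eventually_bot fun k => hm (m + k) (Nat.le_add_right m k)
  · -- SigmaBoundedCC
    intro n
    refine ⟨2 ^ n, fun A hAC hA => ?_⟩
    have hfin : A.Finite := by
      by_contra hinf
      obtain ⟨t, htA, htcard⟩ := Set.Infinite.exists_subset_card_eq hinf (2 ^ n)
      exact key n t (htA.trans hAC) (isAC_subset hA htA) htcard
    refine ⟨hfin, ?_⟩
    by_contra hcard
    push_neg at hcard
    obtain ⟨t, htA, htcard⟩ := Finset.exists_subset_card_eq
      (show 2 ^ n ≤ hfin.toFinset.card by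
        rw [← Set.ncard_eq_toFinset_card A hfin]; omega)
    have htA' : (↑t : Set α) ⊆ A := fun x hx => hfin.mem_toFinset.mp (htA hx)
    exact key n t (htA'.trans hAC) (isAC_subset hA htA') htcard
end

section
/- A tight G_δ fragmentation is essentially unique: if {C_n} and {C'_n} are both tight G_δ fragmentations of a Boolean σ-algebra B, then for every n there exists k such that C_n ⊆ C'_k. -/
universe u

open BooleanSigmaAlgebra

/-- A tight `G_δ` fragmentation is essentially unique: if `{C_n}` and `{C'_n}`
are both tight `G_δ` fragmentations then for every `n` there is a `k` with
`C_n ⊆ C'_k`. -/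
theorem tight_gdelta_fragmentation_essentially_unique
    (α : Type u) [BooleanSigmaAlgebra α]
    (C C' : ℕ → Set α)
    (hC : IsFragmentation C) (htC : Tight C) (hgC : GDelta C)
    (hC' : IsFragmentation C') (htC' : Tight C') (hgC' : GDelta C') :
    ∀ n : ℕ, ∃ k : ℕ, C n ⊆ C' k := by
  intro n
  by_contra h
  push_neg at h
  choose a ha ha' using fun k => Set.not_subset.mp (h k)
  exact hgC n a ha (htC' a ha')
end

section
/- Let B be a Boolean algebra of subsets of a set S, let m be a finitely additive measure on B, and let C ⊆ B∖{∅} be such that m(c) ≥ M for all c ∈ C. Then the intersection number of C is at least M. -/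
universe u

/-- A Boolean algebra of subsets of `S`: a collection of subsets containing
`∅` and closed under union and complement. -/
structure IsSetBooleanAlgebra {S : Type u} (B : Set (Set S)) : Prop where
  empty_mem : ∅ ∈ B
  union_mem : ∀ a b : Set S, a ∈ B → b ∈ B → a ∪ b ∈ B
  compl_mem : ∀ a : Set S, a ∈ B → aᶜ ∈ B

/-- A finitely additive (probability) measure on a Boolean set algebra `B`. -/
structure IsFinAddMeasureOn {S : Type u} (B : Set (Set S)) (m : Set S → ℝ) : Prop where
  map_empty : m ∅ = 0
  map_univ : m Set.univ = 1
  nonneg : ∀ a ∈ B, 0 ≤ m a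
  mono : ∀ a ∈ B, ∀ b ∈ B, a ⊆ b → m a ≤ m b
  add : ∀ a ∈ B, ∀ b ∈ B, a ∩ b = ∅ → m (a ∪ b) = m a + m b

/-- The largest size of a set `J ⊆ {1,…,n}` of indices such that
`⋂_{i ∈ J} c_i` is nonempty. -/
noncomputable def maxInterCard {S : Type u} (n : ℕ) (c : Fin n → Set S) : ℕ :=
  sSup {k : ℕ | ∃ J : Finset (Fin n), J.card = k ∧ (⋂ i ∈ J, c i).Nonempty}

/-- The number `κ_s = k/n` associated to the finite sequence
`s = ⟨c_1,…,c_n⟩`, where `k` is the largest size of a set `J ⊆ {1,…,n}` with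
`⋂_{i ∈ J} c_i ≠ ∅`. The intersection number of a family `C` is the infimum
of `kappa n c` over all finite sequences `c` in `C`. -/
noncomputable def kappa {S : Type u} (n : ℕ) (c : Fin n → Set S) : ℝ :=
  (maxInterCard n c : ℝ) / (n : ℝ)

/-- `κ` is a lower bound for the intersection number of `C`, i.e.
`κ ≤ κ_s` for every finite sequence `s` in `C`. (The intersection number of
`C` is at least `κ`.) -/
def InterNumberLB {S : Type u} (C : Set (Set S)) (κ : ℝ) : Prop :=
  ∀ n : ℕ, 0 < n → ∀ c : Fin n → Set S, (∀ i, c i ∈ C) → κ ≤ kappa n c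

/-- A fragmentation of a Boolean set algebra `B`: an increasing sequence of
subsets of `B ∖ {∅}`, each upward closed in `B`, whose union is `B ∖ {∅}`. -/
structure IsSetFragmentation {S : Type u} (B : Set (Set S)) (C : ℕ → Set (Set S)) : Prop where
  mono : ∀ n, C n ⊆ C (n + 1)
  subset : ∀ n, C n ⊆ B \ {∅}
  upward : ∀ n : ℕ, ∀ a ∈ C n, ∀ b ∈ B, a ⊆ b → b ∈ C n
  covers : ∀ a ∈ B, a ≠ ∅ → ∃ n, a ∈ C n

/-! Every point lies in at most `k = maxInterCard n c` of the sets `c i`, so integrating the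
counting function `∑ i, 1_{c i}` against `m` gives `∑ i, m (c i) ≤ k`, while the left side is at
least `n M`. With only finite additivity available, the integration is replaced by an induction
on the index set that splits the domain `a` along one `c j` at a time. -/

namespace IsSetBooleanAlgebra

variable {S : Type u} {B : Set (Set S)}

lemma univ_mem (hB : IsSetBooleanAlgebra B) : Set.univ ∈ B := by
  simpa using hB.compl_mem ∅ hB.empty_mem

lemma inter_mem (hB : IsSetBooleanAlgebra B) {a b : Set S} (ha : a ∈ B) (hb : b ∈ B) :
    a ∩ b ∈ B := by
  rw [← compl_compl (a ∩ b), Set.compl_inter]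
  exact hB.compl_mem _ (hB.union_mem _ _ (hB.compl_mem _ ha) (hB.compl_mem _ hb))

lemma diff_mem (hB : IsSetBooleanAlgebra B) {a b : Set S} (ha : a ∈ B) (hb : b ∈ B) :
    a \ b ∈ B :=
  hB.inter_mem ha (hB.compl_mem _ hb)

end IsSetBooleanAlgebra

namespace IsFinAddMeasureOn

variable {S : Type u} {B : Set (Set S)} {m : Set S → ℝ}

lemma inter_add_diff (hm : IsFinAddMeasureOn B m) (hB : IsSetBooleanAlgebra B) {a b : Set S}
    (ha : a ∈ B) (hb : b ∈ B) : m (a ∩ b) + m (a \ b) = m a := by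
  rw [← hm.add _ (hB.inter_mem ha hb) _ (hB.diff_mem ha hb) (Set.disjoint_sdiff_right.mono_left Set.inter_subset_right).inter_eq,
    Set.inter_union_sdiff]

lemma sum_inter_le_of_sum_indicator_le (hm : IsFinAddMeasureOn B m)
    (hB : IsSetBooleanAlgebra B) {ι : Type*} [DecidableEq ι] {c : ι → Set S}
    (hc : ∀ i, c i ∈ B) (t : Finset ι) {a : Set S} (ha : a ∈ B) {κ : ℝ}
    (hκ : ∀ x ∈ a, ∑ i ∈ t, (c i).indicator 1 x ≤ κ) :
    ∑ i ∈ t, m (c i ∩ a) ≤ κ * m a := by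
  induction t using Finset.induction generalizing a κ with
  | empty =>
    rcases a.eq_empty_or_nonempty with rfl | ⟨x, hx⟩
    · simp [hm.map_empty]
    · simpa using mul_nonneg (by simpa using hκ x hx) (hm.nonneg a ha)
  | @insert j t hj ih =>
    simp only [Finset.sum_insert hj] at hκ ⊢
    have hin : ∑ i ∈ t, m (c i ∩ (a ∩ c j)) ≤ (κ - 1) * m (a ∩ c j) :=
      ih (hB.inter_mem ha (hc j)) fun x hx => by
        have := hκ x hx.1
        rw [Set.indicator_of_mem hx.2] at this
        simp only [Pi.one_apply] at this
        linarith
    have hout : ∑ i ∈ t, m (c i ∩ (a \ c j)) ≤ κ * m (a \ c j) :=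
      ih (hB.diff_mem ha (hc j)) fun x hx => by
        simpa [Set.indicator_of_notMem hx.2] using hκ x hx.1
    have hsplit : ∑ i ∈ t, m (c i ∩ a) =
        ∑ i ∈ t, m (c i ∩ (a ∩ c j)) + ∑ i ∈ t, m (c i ∩ (a \ c j)) := by
      rw [← Finset.sum_add_distrib]
      refine Finset.sum_congr rfl fun i _ => ?_
      rw [← Set.inter_assoc, ← Set.inter_sdiff_assoc,
        hm.inter_add_diff hB (hB.inter_mem (hc i) ha) (hc j)]
    have ha_split := hm.inter_add_diff hB ha (hc j)
    rw [Set.inter_comm, hsplit, ← ha_split]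
    linarith

end IsFinAddMeasureOn

lemma card_le_maxInterCard {S : Type u} {n : ℕ} (c : Fin n → Set S) {J : Finset (Fin n)}
    (hJ : (⋂ i ∈ J, c i).Nonempty) : J.card ≤ maxInterCard n c := by
  refine le_csSup ⟨n, ?_⟩ ⟨J, rfl, hJ⟩
  rintro k ⟨J', rfl, -⟩
  simpa using J'.card_le_univ

lemma sum_indicator_le_maxInterCard {S : Type u} {n : ℕ} (c : Fin n → Set S) (x : S) :
    ∑ i, (c i).indicator (1 : S → ℝ) x ≤ maxInterCard n c := by
  classical
  simp only [Set.indicator_apply, Pi.one_apply, Finset.sum_boole]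
  exact_mod_cast card_le_maxInterCard c (J := Finset.univ.filter fun i => x ∈ c i) ⟨x, by simp⟩

theorem interNumber_ge_of_measure_ge_general {S : Type u}
    (B : Set (Set S)) (hB : IsSetBooleanAlgebra B)
    (m : Set S → ℝ) (hm : IsFinAddMeasureOn B m)
    (C : Set (Set S)) (hC : C ⊆ B \ {∅})
    (M : ℝ) (hM : ∀ c ∈ C, M ≤ m c) :
    InterNumberLB C M := by
  intro n hn c hc
  classical
  have hcount : ∑ i, m (c i ∩ Set.univ) ≤ maxInterCard n c * m Set.univ :=
    hm.sum_inter_le_of_sum_indicator_le hB (fun i => (hC (hc i)).1) _ hB.univ_mem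
      fun x _ => sum_indicator_le_maxInterCard c x
  rw [kappa, le_div_iff₀ (by exact_mod_cast hn)]
  calc M * n = ∑ _i : Fin n, M := by simp [mul_comm]
    _ ≤ ∑ i, m (c i) := Finset.sum_le_sum fun i _ => hM _ (hc i)
    _ ≤ maxInterCard n c := by simpa [hm.map_univ] using hcount

/-- If `m` is a finitely additive measure on a Boolean set algebra `B` and
`C ⊆ B ∖ {∅}` satisfies `m(c) ≥ M` for all `c ∈ C`, then the intersection
number of `C` is at least `M`. -/
theorem interNumber_ge_of_measure_ge {S : Type u} [Nonempty S]
    (B : Set (Set S)) (hB : IsSetBooleanAlgebra B)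
    (m : Set S → ℝ) (hm : IsFinAddMeasureOn B m)
    (C : Set (Set S)) (hC : C ⊆ B \ {∅})
    (M : ℝ) (hM : ∀ c ∈ C, M ≤ m c) :
    InterNumberLB C M :=
  interNumber_ge_of_measure_ge_general B hB m hm C hC M hM
end

section
/- (Kelley) Let B be a Boolean algebra of subsets of a set S and let C ⊆ B∖{∅} have positive intersection number κ. Then there exists a finitely additive measure m on B (with m(∅)=0, m(S)=1, m nonnegative, monotone, and additive on disjoint pairs) such that m(c) ≥ κ for all c ∈ C. -/
universe u

lemma maxInterCard_achieved {S : Type u} [Nonempty S] (n : ℕ) (c : Fin n → Set S) :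
    ∃ J : Finset (Fin n), J.card = maxInterCard n c ∧ (⋂ i ∈ J, c i).Nonempty := by
  have h0 : 0 ∈ {k : ℕ | ∃ J : Finset (Fin n), J.card = k ∧ (⋂ i ∈ J, c i).Nonempty} :=
    ⟨∅, by simp, by simp⟩
  have hbdd : BddAbove {k : ℕ | ∃ J : Finset (Fin n), J.card = k ∧ (⋂ i ∈ J, c i).Nonempty} := by
    refine ⟨n, ?_⟩
    rintro x ⟨J, rfl, -⟩
    simpa using Finset.card_le_univ J
  exact Nat.sSup_mem ⟨0, h0⟩ hbdd

lemma key {S : Type u} [Nonempty S] {C : Set (Set S)} {κ : ℝ}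
    (hκ : InterNumberLB C κ) {ι : Type} (t : Finset ι) (w : ι → ℝ)
    (hw : ∀ i ∈ t, 0 ≤ w i) (hw1 : ∑ i ∈ t, w i = 1)
    (c : ι → Set S) (hc : ∀ i ∈ t, c i ∈ C) {ε : ℝ} (hε : 0 < ε) :
    ∃ x : S, κ - ε < ∑ i ∈ t, w i * (c i).indicator 1 x := by
  obtain ⟨n, hn⟩ := exists_nat_gt ((t.card : ℝ) / ε)
  have htne : t.Nonempty := Finset.nonempty_of_sum_ne_zero (by rw [hw1]; norm_num)
  have htcpos : (0:ℝ) < t.card := by exact_mod_cast Finset.card_pos.mpr htne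
  have hnpos : (0:ℝ) < n := lt_trans (div_pos htcpos hε) hn
  set k : ι → ℕ := fun i => ⌈(n : ℝ) * w i⌉₊ with hk
  have hkge : ∀ i ∈ t, (n : ℝ) * w i ≤ k i := fun i _ => Nat.le_ceil _
  have hklt : ∀ i ∈ t, (k i : ℝ) < n * w i + 1 := fun i hi =>
    Nat.ceil_lt_add_one (mul_nonneg hnpos.le (hw i hi))
  set N : ℕ := ∑ i ∈ t, k i with hNdef
  have hcard : Fintype.card (Σ i : {x // x ∈ t}, Fin (k i.1)) = N := by
    rw [Fintype.card_sigma]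
    simp only [Fintype.card_fin]
    exact Finset.sum_coe_sort t k
  have hNsum : (N : ℝ) = ∑ i ∈ t, (k i : ℝ) := by push_cast [hNdef]; rfl
  have hNge : (n : ℝ) ≤ N := by
    rw [hNsum]
    calc (n : ℝ) = ∑ i ∈ t, n * w i := by rw [← Finset.mul_sum, hw1, mul_one]
    _ ≤ ∑ i ∈ t, (k i : ℝ) := Finset.sum_le_sum hkge
  have hNR : (0:ℝ) < N := lt_of_lt_of_le hnpos hNge
  have hNpos : 0 < N := by exact_mod_cast hNR
  set e : (Σ i : {x // x ∈ t}, Fin (k i.1)) ≃ Fin N :=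
    (Fintype.equivFin _).trans (finCongr hcard) with he
  set c' : Fin N → Set S := fun j => c (e.symm j).1.1 with hc'
  have hc'C : ∀ j, c' j ∈ C := fun j => hc _ (e.symm j).1.2
  have h1 := hκ N hNpos c' hc'C
  obtain ⟨J, hJcard, x, hx⟩ := maxInterCard_achieved N c'
  refine ⟨x, ?_⟩
  have hκN : κ * N ≤ (J.card : ℝ) := by
    rw [hJcard]
    rw [kappa] at h1
    calc κ * N ≤ ((maxInterCard N c' : ℝ) / N) * N :=
          mul_le_mul_of_nonneg_right h1 (by positivity)
    _ = (maxInterCard N c' : ℝ) := by field_simp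
  have hJle : (J.card : ℝ) ≤ ∑ j : Fin N, (c' j).indicator (1 : S → ℝ) x := by
    calc (J.card : ℝ) = ∑ j ∈ J, (c' j).indicator (1 : S → ℝ) x := by
          rw [Finset.sum_congr rfl (fun j hj => ?_), Finset.sum_const, nsmul_eq_mul, mul_one]
          have hxj : x ∈ c' j := Set.mem_iInter₂.mp hx j hj
          simp [Set.indicator_of_mem hxj]
    _ ≤ ∑ j : Fin N, (c' j).indicator (1 : S → ℝ) x := by
          apply Finset.sum_le_sum_of_subset_of_nonneg (Finset.subset_univ J)
          intro j _ _
          exact Set.indicator_nonneg (by intro _ _; norm_num) x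
  have hsum : ∑ j : Fin N, (c' j).indicator (1 : S → ℝ) x
      = ∑ i ∈ t, (k i : ℝ) * (c i).indicator 1 x := by
    rw [← Equiv.sum_comp e (fun j => (c' j).indicator (1 : S → ℝ) x)]
    simp only [hc', Equiv.symm_apply_apply]
    rw [show (Finset.univ : Finset (Σ i : {x // x ∈ t}, Fin (k i.1)))
        = Finset.univ.sigma (fun _ => Finset.univ) from (Finset.univ_sigma_univ).symm,
      Finset.sum_sigma]
    rw [← Finset.sum_coe_sort t (fun i => (k i : ℝ) * (c i).indicator 1 x)]
    apply Finset.sum_congr rfl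
    intro i _
    simp [Finset.sum_const, mul_comm]
  have hmain : κ ≤ ∑ i ∈ t, ((k i : ℝ) / N) * (c i).indicator 1 x := by
    have h2 : κ * N ≤ ∑ i ∈ t, (k i : ℝ) * (c i).indicator 1 x :=
      hsum ▸ le_trans hκN hJle
    calc κ = (κ * N) / N := by field_simp
    _ ≤ (∑ i ∈ t, (k i : ℝ) * (c i).indicator 1 x) / N := by gcongr
    _ = _ := by rw [Finset.sum_div]; exact Finset.sum_congr rfl (fun i _ => by ring)
  -- per-term estimate
  have hterm : ∀ i ∈ t, ((k i : ℝ) / N) * (c i).indicator 1 x - 1 / n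
      ≤ w i * (c i).indicator 1 x := by
    intro i hi
    have hd0 : 0 ≤ (c i).indicator (1 : S → ℝ) x :=
      Set.indicator_nonneg (by intro _ _; norm_num) x
    have hd1 : (c i).indicator (1 : S → ℝ) x ≤ 1 := by
      by_cases h : x ∈ c i <;> simp [Set.indicator, h]
    have hkN : (k i : ℝ) / N ≤ (k i : ℝ) / n := by gcongr
    have hwk : ((k i : ℝ) - 1) / n ≤ w i := by
      rw [div_le_iff₀ hnpos]
      nlinarith [hklt i hi]
    calc ((k i : ℝ) / N) * (c i).indicator 1 x - 1 / n
        ≤ ((k i : ℝ) / n) * (c i).indicator 1 x - (c i).indicator 1 x / n := by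
          have h3 : (c i).indicator (1 : S → ℝ) x / n ≤ 1 / n := by gcongr
          have h4 : ((k i : ℝ) / N) * (c i).indicator 1 x ≤ ((k i : ℝ) / n) * (c i).indicator 1 x :=
            mul_le_mul_of_nonneg_right hkN hd0
          linarith
    _ = (((k i : ℝ) - 1) / n) * (c i).indicator 1 x := by ring
    _ ≤ w i * (c i).indicator 1 x := mul_le_mul_of_nonneg_right hwk hd0
  have hcardn : (t.card : ℝ) / n < ε := by
    rw [div_lt_iff₀ hnpos]
    rw [div_lt_iff₀ hε] at hn
    nlinarith
  calc κ - ε < κ - (t.card : ℝ) / n := by linarith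
  _ ≤ (∑ i ∈ t, ((k i : ℝ) / N) * (c i).indicator 1 x) - (t.card : ℝ) / n := by linarith
  _ = ∑ i ∈ t, (((k i : ℝ) / N) * (c i).indicator 1 x - 1 / n) := by
        rw [Finset.sum_sub_distrib, Finset.sum_const, nsmul_eq_mul]
        ring
  _ ≤ ∑ i ∈ t, w i * (c i).indicator 1 x := Finset.sum_le_sum hterm


/-- **Kelley.** If `C ⊆ B ∖ {∅}` has positive intersection number `κ`, then
there is a finitely additive measure `m` on `B` with `m(c) ≥ κ` for all
`c ∈ C`. -/
theorem kelley {S : Type u} [Nonempty S]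
    (B : Set (Set S)) (hB : IsSetBooleanAlgebra B)
    (C : Set (Set S)) (hC : C ⊆ B \ {∅})
    (κ : ℝ) (hκpos : 0 < κ) (hκ : InterNumberLB C κ) :
    ∃ m : Set S → ℝ, IsFinAddMeasureOn B m ∧ ∀ c ∈ C, κ ≤ m c := by
  classical
  rcases C.eq_empty_or_nonempty with hCe | hCne
  · -- Dirac measure at an arbitrary point
    obtain ⟨x₀⟩ := ‹Nonempty S›
    refine ⟨fun a => a.indicator (1 : S → ℝ) x₀, ⟨by simp, by simp, ?_, ?_, ?_⟩, ?_⟩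
    · intro a _
      exact Set.indicator_nonneg (fun _ _ => by norm_num) x₀
    · intro a _ b _ hab
      exact Set.indicator_le_indicator_of_subset hab (fun _ => by norm_num) x₀
    · intro a _ b _ hab
      by_cases ha : x₀ ∈ a <;> by_cases hb : x₀ ∈ b
      · exact absurd (Set.eq_empty_iff_forall_notMem.mp hab x₀ ⟨ha, hb⟩) (fun h => h)
      all_goals simp [Set.indicator, ha, hb]
    · intro c hc
      rw [hCe] at hc
      exact absurd hc (Set.notMem_empty c)
  · letI : TopologicalSpace S := ⊥
    haveI : DiscreteTopology S := ⟨rfl⟩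
    set ind : Set S → BoundedContinuousFunction S ℝ := fun a =>
      BoundedContinuousFunction.ofNormedAddCommGroup (a.indicator (1 : S → ℝ))
        continuous_of_discreteTopology 1
        (fun x => by by_cases h : x ∈ a <;> simp [Set.indicator, h]) with hind
    have ind_apply : ∀ (a : Set S) (x : S), ind a x = a.indicator 1 x := fun _ _ => rfl
    set one : BoundedContinuousFunction S ℝ := BoundedContinuousFunction.const S (1 : ℝ) with hone
    set D : Set (BoundedContinuousFunction S ℝ) := {f : BoundedContinuousFunction S ℝ | ∃ s : ℝ, s < κ ∧ ∀ x, f x ≤ s} with hD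
    set A : Set (BoundedContinuousFunction S ℝ) := convexHull ℝ (ind '' C) with hA
    have hDconv : Convex ℝ D := by
      rintro f ⟨s, hs, hfs⟩ g ⟨r, hr, hgr⟩ a b ha hb hab
      refine ⟨a * s + b * r, ?_, fun x => ?_⟩
      · rcases eq_or_lt_of_le ha with h | h
        · nlinarith
        · nlinarith [mul_lt_mul_of_pos_left hs h, mul_le_mul_of_nonneg_left hr.le hb]
      · have : (a • f + b • g) x = a * f x + b * g x := by simp
        rw [this]
        have h1 : a * f x ≤ a * s := mul_le_mul_of_nonneg_left (hfs x) ha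
        have h2 : b * g x ≤ b * r := mul_le_mul_of_nonneg_left (hgr x) hb
        linarith
    have hDopen : IsOpen D := by
      rw [Metric.isOpen_iff]
      rintro f ⟨s, hs, hfs⟩
      refine ⟨(κ - s) / 2, by linarith, fun g hg => ?_⟩
      rw [Metric.mem_ball] at hg
      refine ⟨s + (κ - s) / 2, by linarith, fun x => ?_⟩
      have h1 : dist (g x) (f x) ≤ dist g f := BoundedContinuousFunction.dist_coe_le_dist x
      have h2 : g x - f x ≤ dist (g x) (f x) := by
        rw [Real.dist_eq]; exact le_trans (le_abs_self _) le_rfl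
      have := hfs x
      linarith
    have hdisj : Disjoint D A := by
      rw [Set.disjoint_left]
      rintro g ⟨s, hs, hgs⟩ hgA
      rw [hA, convexHull_eq] at hgA
      obtain ⟨ι, t, w, z, hw, hw1, hz, hcm⟩ := hgA
      have hzc : ∀ i ∈ t, ∃ a ∈ C, ind a = z i := fun i hi => hz i hi
      choose c0 hc0C hc0e using hzc
      set c : ι → Set S := fun i => if h : i ∈ t then c0 i h else hCne.choose with hc
      have hcC : ∀ i ∈ t, c i ∈ C := by
        intro i hi; rw [hc]; simp only [dif_pos hi]; exact hc0C i hi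
      have hce : ∀ i ∈ t, ind (c i) = z i := by
        intro i hi; rw [hc]; simp only [dif_pos hi]; exact hc0e i hi
      obtain ⟨x, hx⟩ := key hκ t w hw hw1 c hcC (sub_pos.mpr hs)
      have hgx : g x = ∑ i ∈ t, w i * (c i).indicator 1 x := by
        rw [← hcm, Finset.centerMass_eq_of_sum_1 _ _ hw1]
        have : (∑ i ∈ t, w i • z i) x = ∑ i ∈ t, w i * (z i) x := by simp
        rw [this]
        refine Finset.sum_congr rfl fun i hi => ?_
        rw [← hce i hi, ind_apply]
      have := hgs x
      rw [hgx] at this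
      have hlt : κ - (κ - s) < ∑ i ∈ t, w i * (c i).indicator 1 x := hx
      linarith
    obtain ⟨φ, u, hu1, hu2⟩ := geometric_hahn_banach_open hDconv hDopen (convex_convexHull ℝ _) hdisj
    have h0D : (0 : BoundedContinuousFunction S ℝ) ∈ D := ⟨κ / 2, by linarith, fun x => by
      simp; linarith⟩
    have hupos : 0 < u := by simpa using hu1 0 h0D
    have hpos : ∀ f : BoundedContinuousFunction S ℝ, (∀ x, f x ≤ 0) → φ f ≤ 0 := by
      intro f hf
      by_contra h
      push_neg at h
      have hmem : ∀ r : ℝ, 0 ≤ r → φ (r • f) < u := by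
        intro r hr
        refine hu1 _ ⟨κ / 2, by linarith, fun x => ?_⟩
        have : (r • f) x = r * f x := by simp
        rw [this]
        nlinarith [hf x]
      have h2 := hmem ((u + 1) / φ f) (by positivity)
      rw [map_smul, smul_eq_mul] at h2
      rw [div_mul_cancel₀ _ (ne_of_gt h)] at h2
      linarith
    have hmono : ∀ f g : BoundedContinuousFunction S ℝ, (∀ x, f x ≤ g x) → φ f ≤ φ g := by
      intro f g hfg
      have := hpos (f - g) (fun x => by
        have : (f - g) x = f x - g x := by simp
        rw [this]; linarith [hfg x])
      rw [map_sub] at this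
      linarith
    have hone_apply : ∀ x, one x = 1 := fun _ => rfl
    have hκu : κ * φ one ≤ u := by
      have hθ : ∀ θ : ℝ, 0 < θ → θ < 1 → θ * κ * φ one < u := by
        intro θ h0 h1
        have hDm : ((θ * κ) • one) ∈ D := by
          refine ⟨θ * κ, by nlinarith, fun x => ?_⟩
          have : ((θ * κ) • one) x = (θ * κ) * one x := by simp
          rw [this, hone_apply, mul_one]
        have := hu1 _ hDm
        rw [map_smul, smul_eq_mul] at this
        linarith
      by_contra h
      push_neg at h
      have hκφ : 0 < κ * φ one := lt_trans hupos h
      set θ := u / (κ * φ one) with hθdef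
      have h0 : 0 < θ := div_pos hupos hκφ
      have h1 : θ < 1 := (div_lt_one hκφ).mpr h
      have := hθ θ h0 h1
      rw [hθdef] at this
      rw [show u / (κ * φ one) * κ * φ one = u / (κ * φ one) * (κ * φ one) by ring,
        div_mul_cancel₀ _ (ne_of_gt hκφ)] at this
      exact lt_irrefl u this
    have hφ1 : 0 < φ one := by
      obtain ⟨c₀, hc₀⟩ := hCne
      have h1 : u ≤ φ (ind c₀) := hu2 _ (subset_convexHull ℝ _ ⟨c₀, hc₀, rfl⟩)
      have h2 : φ (ind c₀) ≤ φ one := by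
        refine hmono _ _ fun x => ?_
        rw [ind_apply, hone_apply]
        by_cases hxc : x ∈ c₀ <;> simp [Set.indicator, hxc]
      linarith
    refine ⟨fun a => φ (ind a) / φ one, ⟨?_, ?_, ?_, ?_, ?_⟩, ?_⟩
    · -- empty
      have : ind ∅ = 0 := by
        ext x; rw [ind_apply]; simp
      rw [this, map_zero, zero_div]
    · -- univ
      have : ind Set.univ = one := by
        ext x; rw [ind_apply, hone_apply]; simp
      rw [this, div_self (ne_of_gt hφ1)]
    · -- nonneg
      intro a _
      have : φ (-(ind a)) ≤ 0 := hpos _ (fun x => by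
        have h2 : (-(ind a)) x = -(ind a x) := by simp
        rw [h2, ind_apply, neg_nonpos]
        exact Set.indicator_nonneg (fun _ _ => by norm_num) x)
      rw [map_neg] at this
      exact div_nonneg (by linarith) hφ1.le
    · -- mono
      intro a _ b _ hab
      have hnum : φ (ind a) ≤ φ (ind b) := hmono _ _ (fun x => by
        rw [ind_apply, ind_apply]
        exact Set.indicator_le_indicator_of_subset hab (fun _ => by norm_num) x)
      exact div_le_div_of_nonneg_right hnum hφ1.le
    · -- add
      intro a _ b _ hab
      have : ind (a ∪ b) = ind a + ind b := by
        ext x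
        have h2 : (ind a + ind b) x = ind a x + ind b x := by simp
        rw [h2, ind_apply, ind_apply, ind_apply]
        by_cases ha : x ∈ a <;> by_cases hb : x ∈ b
        · exact absurd (Set.eq_empty_iff_forall_notMem.mp hab x ⟨ha, hb⟩) (fun h => h)
        all_goals simp [Set.indicator, ha, hb]
      rw [this, map_add, add_div]
    · -- κ ≤ m c
      intro c hc
      have h1 : u ≤ φ (ind c) := hu2 _ (subset_convexHull ℝ _ ⟨c, hc, rfl⟩)
      rw [le_div_iff₀ hφ1]
      linarith
end
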